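/- For every real σ with 0 ≤ σ ≤ 1 and σ ≠ 1/2, there is at most one t in (0, +∞) with ‖X(σ + it)‖ = 1, and at most one t in (-∞, 0) with ‖X(σ + it)‖ = 1. -/

import Mathlib

noncomputable def X (s : ℂ) : ℂ :=
  (5 / Real.pi : ℂ) ^ ((1 : ℂ) / 2 - s) * Complex.Gamma (1 - s / 2) / Complex.Gamma ((1 + s) / 2)

/-!
Writing `a = 1 - σ/2`, `b = (1 + σ)/2`, `y = t/2` and using `‖Γ(s̄)‖ = ‖Γ(s)‖`,
`‖X(σ + it)‖ = (5/π)^(1/2 - σ) ‖Γ(a + iy)‖ / ‖Γ(b + iy)‖`. By Gauss's product formula the square of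
this ratio is a limit of products of `((b + j)² + y²) / ((a + j)² + y²)`, each monotone in `|y|`
in the same direction when `a ≠ b`. Hence `‖X(σ + it)‖` is strictly monotone in `|t|`, and takes
the value `1` at most once on each half-line.
-/

open Complex Filter Finset Topology
open scoped Nat ComplexConjugate

namespace Complex

theorem norm_GammaSeq (s : ℂ) {n : ℕ} (hn : n ≠ 0) :
    ‖GammaSeq s n‖ = (n : ℝ) ^ s.re * n ! / ∏ j ∈ range (n + 1), ‖s + j‖ := by
  rw [GammaSeq, norm_div, norm_mul, norm_prod, ← ofReal_natCast,
    norm_cpow_eq_rpow_re_of_pos (by positivity)]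
  simp

theorem norm_Gamma_conj (s : ℂ) : ‖Gamma (conj s)‖ = ‖Gamma s‖ := by
  rw [Gamma_conj, RCLike.norm_conj]

theorem Gamma_ofReal_add_mul_I_ne_zero {c : ℝ} (hc : 0 < c) (y : ℝ) : Gamma (c + y * I) ≠ 0 :=
  Gamma_ne_zero_of_re_pos (by simpa)

/-- Squaring, this is `(p² - q²)(y₂² - y₁²) ≥ 0`. -/
theorem norm_mul_norm_le_of_abs_le {p q y₁ y₂ : ℝ} (hpq : |q| ≤ |p|) (hy : |y₁| ≤ |y₂|) :
    ‖(p : ℂ) + y₂ * I‖ * ‖(q : ℂ) + y₁ * I‖ ≤ ‖(p : ℂ) + y₁ * I‖ * ‖(q : ℂ) + y₂ * I‖ := by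
  simp only [norm_add_mul_I]
  rw [← Real.sqrt_mul (by positivity), ← Real.sqrt_mul (by positivity)]
  apply Real.sqrt_le_sqrt
  nlinarith [mul_nonneg (sub_nonneg.2 (sq_le_sq.2 hpq)) (sub_nonneg.2 (sq_le_sq.2 hy))]

theorem norm_mul_norm_lt_of_abs_lt {p q y₁ y₂ : ℝ} (hpq : |q| < |p|) (hy : |y₁| < |y₂|) :
    ‖(p : ℂ) + y₂ * I‖ * ‖(q : ℂ) + y₁ * I‖ < ‖(p : ℂ) + y₁ * I‖ * ‖(q : ℂ) + y₂ * I‖ := by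
  simp only [norm_add_mul_I]
  rw [← Real.sqrt_mul (by positivity), ← Real.sqrt_mul (by positivity)]
  apply Real.sqrt_lt_sqrt (by positivity)
  nlinarith [mul_pos (sub_pos.2 (sq_lt_sq.2 hpq)) (sub_pos.2 (sq_lt_sq.2 hy))]

section GammaVertical

variable {a b y₁ y₂ : ℝ}

theorem norm_GammaSeq_mul_le (hb : 0 < b) (hba : b ≤ a) (hy : |y₁| ≤ |y₂|) {n : ℕ}
    (hn : n ≠ 0) :
    ‖GammaSeq (a + y₁ * I) n‖ * ‖GammaSeq (b + y₂ * I) n‖ ≤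
      ‖GammaSeq (a + y₂ * I) n‖ * ‖GammaSeq (b + y₁ * I) n‖ := by
  have ha : 0 < a := hb.trans_le hba
  have shift (c y : ℝ) (j : ℕ) : (c + y * I : ℂ) + j = ((c + j : ℝ) : ℂ) + y * I := by
    push_cast; ring
  have factor_pos (c y : ℝ) (hc : 0 < c) (j : ℕ) : 0 < ‖(c + y * I : ℂ) + j‖ := by
    rw [shift, norm_pos_iff]
    exact ne_zero_of_re_pos (by simp; positivity)
  simp only [norm_GammaSeq _ hn, add_re, ofReal_re, mul_re, I_re, I_im, mul_zero, ofReal_im,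
    mul_one, sub_self, add_zero, div_mul_div_comm, ← prod_mul_distrib]
  refine div_le_div_of_nonneg_left (by positivity)
    (prod_pos fun j _ ↦ mul_pos (factor_pos a y₂ ha j) (factor_pos b y₁ hb j))
    (prod_le_prod (fun j _ ↦ by positivity) fun j _ ↦ ?_)
  simp only [shift]
  refine norm_mul_norm_le_of_abs_le ?_ hy
  rw [abs_of_pos (by positivity), abs_of_pos (by positivity)]
  linarith

theorem norm_Gamma_mul_le (hb : 0 < b) (hba : b ≤ a) (hy : |y₁| ≤ |y₂|) :
    ‖Gamma (a + y₁ * I)‖ * ‖Gamma (b + y₂ * I)‖ ≤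
      ‖Gamma (a + y₂ * I)‖ * ‖Gamma (b + y₁ * I)‖ := by
  have lim (s t : ℂ) : Tendsto (fun n ↦ ‖GammaSeq s n‖ * ‖GammaSeq t n‖) atTop
      (𝓝 (‖Gamma s‖ * ‖Gamma t‖)) :=
    (GammaSeq_tendsto_Gamma s).norm.mul (GammaSeq_tendsto_Gamma t).norm
  exact le_of_tendsto_of_tendsto (lim _ _) (lim _ _) <|
    (eventually_ne_atTop 0).mono fun n hn ↦ norm_GammaSeq_mul_le hb hba hy hn

/-- Strictness comes from the first Gauss factor, split off by `Γ(s + 1) = s Γ(s)`. -/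
theorem norm_Gamma_mul_lt (hb : 0 < b) (hba : b < a) (hy : |y₁| < |y₂|) :
    ‖Gamma (a + y₁ * I)‖ * ‖Gamma (b + y₂ * I)‖ <
      ‖Gamma (a + y₂ * I)‖ * ‖Gamma (b + y₁ * I)‖ := by
  have ha : 0 < a := hb.trans hba
  have ne_zero (c y : ℝ) (hc : 0 < c) : (c + y * I : ℂ) ≠ 0 := ne_zero_of_re_pos (by simpa)
  have recurrence (c y : ℝ) (hc : 0 < c) :
      ‖Gamma ((c + 1 : ℝ) + y * I)‖ = ‖(c + y * I : ℂ)‖ * ‖Gamma (c + y * I)‖ := by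
    rw [show ((c + 1 : ℝ) : ℂ) + y * I = (c + y * I) + 1 by push_cast; ring,
      Gamma_add_one _ (ne_zero c y hc), norm_mul]
  have shifted := norm_Gamma_mul_le (a := a + 1) (b := b + 1) (by linarith) (by linarith) hy.le
  rw [recurrence a _ ha, recurrence a _ ha, recurrence b _ hb, recurrence b _ hb] at shifted
  have first_factor :
      ‖(a + y₂ * I : ℂ)‖ * ‖(b + y₁ * I : ℂ)‖ < ‖(a + y₁ * I : ℂ)‖ * ‖(b + y₂ * I : ℂ)‖ :=
    norm_mul_norm_lt_of_abs_lt (by rwa [abs_of_pos ha, abs_of_pos hb]) hy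
  have Gamma_pos : 0 < ‖Gamma (a + y₂ * I)‖ * ‖Gamma (b + y₁ * I)‖ :=
    mul_pos (norm_pos_iff.2 (Gamma_ofReal_add_mul_I_ne_zero ha y₂))
      (norm_pos_iff.2 (Gamma_ofReal_add_mul_I_ne_zero hb y₁))
  refine lt_of_mul_lt_mul_left (a := ‖(a + y₁ * I : ℂ)‖ * ‖(b + y₂ * I : ℂ)‖) ?_ (by positivity)
  calc _ ≤ (‖(a + y₂ * I : ℂ)‖ * ‖(b + y₁ * I : ℂ)‖) *
          (‖Gamma (a + y₂ * I)‖ * ‖Gamma (b + y₁ * I)‖) := by linarith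
    _ < _ := mul_lt_mul_of_pos_right first_factor Gamma_pos

theorem norm_Gamma_mul_ne (ha : 0 < a) (hb : 0 < b) (hab : a ≠ b) (hy : |y₁| ≠ |y₂|) :
    ‖Gamma (a + y₁ * I)‖ * ‖Gamma (b + y₂ * I)‖ ≠
      ‖Gamma (a + y₂ * I)‖ * ‖Gamma (b + y₁ * I)‖ := by
  rcases hab.lt_or_gt with hab | hba <;> rcases hy.lt_or_gt with hy | hy
  · linarith [norm_Gamma_mul_lt ha hab hy]
  · linarith [norm_Gamma_mul_lt ha hab hy]
  · linarith [norm_Gamma_mul_lt hb hba hy]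
  · linarith [norm_Gamma_mul_lt hb hba hy]

end GammaVertical

end Complex

theorem norm_X (σ t : ℝ) :
    ‖X (σ + t * I)‖ = (5 / Real.pi) ^ (1 / 2 - σ) *
      (‖Gamma ((1 - σ / 2 : ℝ) + (t / 2 : ℝ) * I)‖ /
        ‖Gamma (((1 + σ) / 2 : ℝ) + (t / 2 : ℝ) * I)‖) := by
  have hconj : 1 - (σ + t * I : ℂ) / 2 = conj ((1 - σ / 2 : ℝ) + (t / 2 : ℝ) * I) := by
    rw [map_add, map_mul, conj_ofReal, conj_ofReal, conj_I]
    push_cast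
    ring
  rw [X, norm_div, norm_mul, mul_div_assoc, hconj, norm_Gamma_conj,
    show (5 / Real.pi : ℂ) = (5 / Real.pi : ℝ) by push_cast; rfl,
    norm_cpow_eq_rpow_re_of_pos (by positivity)]
  congr 4
  · simp
  · push_cast; ring

theorem norm_X_ne {σ t₁ t₂ : ℝ} (hσ₁ : -1 < σ) (hσ₂ : σ < 2) (hσ : σ ≠ 1 / 2)
    (ht : |t₁| ≠ |t₂|) :
    ‖X (σ + t₁ * I)‖ ≠ ‖X (σ + t₂ * I)‖ := by
  have ha : 0 < 1 - σ / 2 := by linarith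
  have hb : 0 < (1 + σ) / 2 := by linarith
  have hab : 1 - σ / 2 ≠ (1 + σ) / 2 := fun h ↦ hσ (by linarith)
  have ht' : |t₁ / 2| ≠ |t₂ / 2| := by simpa [abs_div] using ht
  rw [norm_X, norm_X, Ne, mul_right_inj' (by positivity), div_eq_div_iff
    (norm_ne_zero_iff.2 (Gamma_ofReal_add_mul_I_ne_zero hb _))
    (norm_ne_zero_iff.2 (Gamma_ofReal_add_mul_I_ne_zero hb _))]
  exact norm_Gamma_mul_ne ha hb hab ht'

theorem stmt_16 (σ : ℝ) (h0 : 0 ≤ σ) (h1 : σ ≤ 1) (hσ : σ ≠ 1 / 2) :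
    {t : ℝ | t ∈ Set.Ioi (0 : ℝ) ∧
      ‖X ((σ : ℂ) + (t : ℂ) * Complex.I)‖ = 1}.Subsingleton ∧
    {t : ℝ | t ∈ Set.Iio (0 : ℝ) ∧
      ‖X ((σ : ℂ) + (t : ℂ) * Complex.I)‖ = 1}.Subsingleton := by
  constructor
  · rintro t₁ ⟨ht₁, hX₁⟩ t₂ ⟨ht₂, hX₂⟩
    by_contra hne
    refine norm_X_ne (by linarith) (by linarith) hσ ?_ (hX₁.trans hX₂.symm)
    rwa [abs_of_pos ht₁, abs_of_pos ht₂]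
  · rintro t₁ ⟨ht₁, hX₁⟩ t₂ ⟨ht₂, hX₂⟩
    by_contra hne
    refine norm_X_ne (by linarith) (by linarith) hσ ?_ (hX₁.trans hX₂.symm)
    rwa [abs_of_neg ht₁, abs_of_neg ht₂, Ne, neg_inj]
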